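/- arXiv:1902.01997 — 2 statements merged into one kernel-verified Lean document; each statement's English description precedes it below -/
import Mathlib

section
/- Let B be a connected real quiver of rank n ≥ 4 which contains the Markov quiver as a proper subquiver, i.e. some principal 3×3 submatrix of B equals, up to simultaneous permutation of its indices, the cyclic quiver (2,2,2). Then B is mutation-infinite. -/
/-!
Inside the Markov triangle `a → b → c → a` every mutation at a triangle vertex gives back a Markov
triangle (with reversed orientation), while it acts on the weights `(x, y, z) = (b_da, b_db, b_dc)`
of a fourth vertex `d` by an explicit piecewise-linear map. If `x > 0` and `x + y > 0`, mutating at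
`a` and then at `b` restores the triangle `a → b → c`, keeps `x + y` and increases `x` by `2 (x + y)`.
Iterating, `b_da` becomes arbitrarily large, so the mutation class is infinite. Connectedness and
`n ≥ 4` provide a vertex `d` outside the triangle joined to it, and at most two mutations at triangle
vertices make its weights satisfy `x > 0`, `x + y > 0`.
-/

open Real

noncomputable section

namespace RealQuiver

variable {n : ℕ}

/-- Mutation of a real quiver (a skew-symmetric real matrix) at vertex `k`. -/
def mutate (B : Matrix (Fin n) (Fin n) ℝ) (k : Fin n) : Matrix (Fin n) (Fin n) ℝ :=
  fun i j => if i = k ∨ j = k then -B i j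
    else B i j + (|B i k| * B k j + B i k * |B k j|) / 2

/-- One mutation step. -/
def MutStep (B C : Matrix (Fin n) (Fin n) ℝ) : Prop := ∃ k, C = mutate B k

/-- `C` is obtained from `B` by a finite sequence of mutations. -/
def Reachable (B C : Matrix (Fin n) (Fin n) ℝ) : Prop :=
  Relation.ReflTransGen MutStep B C

/-- `B` is mutation-finite. -/
def MutationFinite (B : Matrix (Fin n) (Fin n) ℝ) : Prop :=
  {C | Reachable B C}.Finite

/-- Simultaneous permutation of the indices of `B`. -/
def permute (B : Matrix (Fin n) (Fin n) ℝ) (σ : Equiv.Perm (Fin n)) :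
    Matrix (Fin n) (Fin n) ℝ := fun i j => B (σ i) (σ j)

/-- Mutation-equivalence: a finite sequence of mutations followed by a
simultaneous permutation of the indices. -/
def MutEquiv (B C : Matrix (Fin n) (Fin n) ℝ) : Prop :=
  ∃ C' σ, Reachable B C' ∧ C = permute C' σ

/-- The underlying (undirected) graph of a quiver. -/
def toGraph (B : Matrix (Fin n) (Fin n) ℝ) : SimpleGraph (Fin n) where
  Adj i j := i ≠ j ∧ (B i j ≠ 0 ∨ B j i ≠ 0)
  symm := ⟨fun i j h => ⟨h.1.symm, h.2.symm⟩⟩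
  loopless := ⟨fun i h => h.1 rfl⟩

/-- Connectedness of a quiver. -/
def Connected (B : Matrix (Fin n) (Fin n) ℝ) : Prop := (toGraph B).Connected

def IsSkewSymmetric (B : Matrix (Fin n) (Fin n) ℝ) : Prop :=
  ∀ i j, B j i = -B i j

/-- A quiver is cyclic if its directed graph (an arrow `i → j` whenever
`B i j > 0`) contains a directed cycle. -/
def Cyclic (B : Matrix (Fin n) (Fin n) ℝ) : Prop :=
  ∃ i, Relation.TransGen (fun a b => 0 < B a b) i i

def Acyclic (B : Matrix (Fin n) (Fin n) ℝ) : Prop := ¬ Cyclic B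

/-- The rank-3 cyclic quiver `(a,b,c)`: `b₁₂ = a`, `b₂₃ = b`, `b₃₁ = c`. -/
def cyclicQ (a b c : ℝ) : Matrix (Fin 3) (Fin 3) ℝ :=
  !![0, a, -c; -a, 0, b; c, -b, 0]

/-- The rank-3 acyclic quiver `(a,b,-c)`: `b₁₂ = a`, `b₂₃ = b`, `b₁₃ = c`. -/
def acyclicQ (a b c : ℝ) : Matrix (Fin 3) (Fin 3) ℝ :=
  !![0, a, c; -a, 0, b; -c, -b, 0]

/-- `d` is the highest denominator of the mutation class of `B`. -/
def HighestDenom (B : Matrix (Fin n) (Fin n) ℝ) (d : ℕ) : Prop :=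
  (∀ C, MutEquiv B C → ∀ i j, i ≠ j →
    C i j = 0 ∨ ∃ p q : ℕ, 2 * p < q ∧ q ≤ d ∧ |C i j| = 2 * Real.cos (π * p / q)) ∧
  (∃ C, MutEquiv B C ∧ ∃ i j, ∃ p : ℕ, 0 < p ∧ 2 * p < d ∧ Nat.gcd p d = 1 ∧
    |C i j| = 2 * Real.cos (π * p / d))

/-- The rank-4 quiver `L n` (even denominator `d = 2n`):
`b₁₂ = b₂₃ = 2cos(π/2n)`, `b₃₁ = 2`, `b₁₄ = b₄₃ = 2cos(π(n-1)/2n)`, `b₂₄ = 0`. -/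
def Lq (n : ℕ) : Matrix (Fin 4) (Fin 4) ℝ :=
  !![0, 2 * Real.cos (π / (2 * n)), -2, 2 * Real.cos (π * ((n : ℝ) - 1) / (2 * n));
     -(2 * Real.cos (π / (2 * n))), 0, 2 * Real.cos (π / (2 * n)), 0;
     2, -(2 * Real.cos (π / (2 * n))), 0, -(2 * Real.cos (π * ((n : ℝ) - 1) / (2 * n)));
     -(2 * Real.cos (π * ((n : ℝ) - 1) / (2 * n))), 0, 2 * Real.cos (π * ((n : ℝ) - 1) / (2 * n)), 0]

/-- The rank-4 quiver `M n` (even denominator `d = 2n`):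
`b₁₂ = b₂₃ = 2cos(π/2n)`, `b₃₁ = 2`, `b₂₄ = 2cos(π(n-1)/2n)`, `b₁₄ = b₃₄ = 0`. -/
def Mq (n : ℕ) : Matrix (Fin 4) (Fin 4) ℝ :=
  !![0, 2 * Real.cos (π / (2 * n)), -2, 0;
     -(2 * Real.cos (π / (2 * n))), 0, 2 * Real.cos (π / (2 * n)), 2 * Real.cos (π * ((n : ℝ) - 1) / (2 * n));
     2, -(2 * Real.cos (π / (2 * n))), 0, 0;
     0, -(2 * Real.cos (π * ((n : ℝ) - 1) / (2 * n))), 0, 0]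

/-- The rank-4 quiver `O n` (odd denominator `d = 2n+1`):
`b₁₂ = b₂₃ = 2cos(π/d)`, `b₃₁ = 2`, `b₁₄ = b₂₄ = b₄₃ = 2cos(πn/d)`. -/
def Oq (n : ℕ) : Matrix (Fin 4) (Fin 4) ℝ :=
  !![0, 2 * Real.cos (π / (2 * n + 1)), -2, 2 * Real.cos (π * n / (2 * n + 1));
     -(2 * Real.cos (π / (2 * n + 1))), 0, 2 * Real.cos (π / (2 * n + 1)), 2 * Real.cos (π * n / (2 * n + 1));
     2, -(2 * Real.cos (π / (2 * n + 1))), 0, -(2 * Real.cos (π * n / (2 * n + 1)));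
     -(2 * Real.cos (π * n / (2 * n + 1))), -(2 * Real.cos (π * n / (2 * n + 1))), 2 * Real.cos (π * n / (2 * n + 1)), 0]

section Mutation

variable {B C : Matrix (Fin n) (Fin n) ℝ}

lemma mutate_apply_of_ne {k i j : Fin n} (hi : i ≠ k) (hj : j ≠ k) :
    mutate B k i j = B i j + (|B i k| * B k j + B i k * |B k j|) / 2 := by
  simp [mutate, hi, hj]

lemma mutate_apply_of_eq {k i j : Fin n} (h : i = k ∨ j = k) : mutate B k i j = -B i j :=
  if_pos h

lemma reachable_mutate (B : Matrix (Fin n) (Fin n) ℝ) (k : Fin n) : Reachable B (mutate B k) :=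
  .single ⟨k, rfl⟩

lemma IsSkewSymmetric.apply_self (hB : IsSkewSymmetric B) (i : Fin n) : B i i = 0 := by
  linarith [hB i i]

lemma IsSkewSymmetric.mutate (hB : IsSkewSymmetric B) (k : Fin n) :
    IsSkewSymmetric (mutate B k) := by
  intro i j
  by_cases h : i = k ∨ j = k
  · rw [mutate_apply_of_eq h, mutate_apply_of_eq h.symm, hB]
  · rw [not_or] at h
    rw [mutate_apply_of_ne h.2 h.1, mutate_apply_of_ne h.1 h.2, hB i j, hB k j, hB i k,
      abs_neg, abs_neg]
    ring

lemma Reachable.isSkewSymmetric (hBC : Reachable B C) (hB : IsSkewSymmetric B) :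
    IsSkewSymmetric C := by
  induction hBC with
  | refl => exact hB
  | tail _ hstep ih =>
    obtain ⟨k, rfl⟩ := hstep
    exact ih.mutate k

lemma MutationFinite.exists_upper_bound (hB : MutationFinite B) (i j : Fin n) :
    ∃ M, ∀ C, Reachable B C → C i j ≤ M := by
  obtain ⟨M, hM⟩ := (hB.image fun C => C i j).bddAbove
  exact ⟨M, fun C hC => hM ⟨C, hC, rfl⟩⟩

lemma toGraph_adj_iff (hB : IsSkewSymmetric B) {i j : Fin n} :
    (toGraph B).Adj i j ↔ i ≠ j ∧ B i j ≠ 0 := by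
  simp only [toGraph, hB i j, ne_eq, neg_eq_zero, or_self]

end Mutation

section MarkovCycle

variable {B : Matrix (Fin n) (Fin n) ℝ} {a b c d : Fin n}

def IsMarkovCycle (B : Matrix (Fin n) (Fin n) ℝ) (a b c : Fin n) : Prop :=
  B a b = 2 ∧ B b c = 2 ∧ B c a = 2

lemma IsMarkovCycle.rotate (h : IsMarkovCycle B a b c) : IsMarkovCycle B b c a :=
  ⟨h.2.1, h.2.2, h.1⟩

lemma IsMarkovCycle.ne (hB : IsSkewSymmetric B) (h : IsMarkovCycle B a b c) : a ≠ b := by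
  rintro rfl
  have := h.1
  rw [hB.apply_self] at this
  norm_num at this

lemma IsMarkovCycle.mutate (hB : IsSkewSymmetric B) (h : IsMarkovCycle B a b c) :
    IsMarkovCycle (mutate B a) a c b := by
  have hab := h.ne hB
  have hca := h.rotate.rotate.ne hB
  refine ⟨?_, ?_, ?_⟩
  · rw [mutate_apply_of_eq (.inl rfl), hB c a, h.2.2]
    norm_num
  · rw [mutate_apply_of_ne hca hab.symm, hB b c, h.2.1, h.2.2, h.1]
    norm_num
  · rw [mutate_apply_of_eq (.inr rfl), hB a b, h.1]
    norm_num

lemma IsMarkovCycle.mutate_apply_next (hB : IsSkewSymmetric B) (h : IsMarkovCycle B a b c)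
    (hd : d ≠ a) : RealQuiver.mutate B a d b = B d b + B d a + |B d a| := by
  rw [mutate_apply_of_ne hd (h.ne hB).symm, h.1]
  norm_num
  ring

-- Mutate at `a`, then at `b`.
lemma IsMarkovCycle.exists_reachable_add (hB : IsSkewSymmetric B) (h : IsMarkovCycle B a b c)
    (hx : 0 < B d a) (hxy : 0 < B d a + B d b) :
    ∃ B', Reachable B B' ∧ IsMarkovCycle B' a b c ∧
      B' d a = B d a + 2 * (B d a + B d b) ∧ B' d b = B d b - 2 * (B d a + B d b) := by
  have hda : d ≠ a := by
    rintro rfl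
    rw [hB.apply_self] at hx
    exact hx.false
  have hdb : d ≠ b := by
    rintro rfl
    rw [hB a d, h.1] at hx
    norm_num at hx
  have h₁ : IsMarkovCycle (RealQuiver.mutate B a) b a c := (h.mutate hB).rotate.rotate
  have hB₁ := hB.mutate a
  have hy₁ : RealQuiver.mutate B a d b = B d b + 2 * B d a := by
    rw [h.mutate_apply_next hB hda, abs_of_pos hx]
    ring
  have hx₁ : RealQuiver.mutate B a d a = -B d a := mutate_apply_of_eq (.inr rfl)
  refine ⟨RealQuiver.mutate (RealQuiver.mutate B a) b, (reachable_mutate B a).tail ⟨b, rfl⟩,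
    (h₁.mutate hB₁).rotate.rotate, ?_, ?_⟩
  · rw [h₁.mutate_apply_next hB₁ hdb, hy₁, hx₁, abs_of_pos (by linarith)]
    ring
  · rw [mutate_apply_of_eq (.inr rfl), hy₁]
    ring

lemma IsMarkovCycle.exists_reachable_add_mul (hB : IsSkewSymmetric B)
    (h : IsMarkovCycle B a b c) (hx : 0 < B d a) (hxy : 0 < B d a + B d b) (m : ℕ) :
    ∃ B', Reachable B B' ∧ IsMarkovCycle B' a b c ∧
      B' d a = B d a + 2 * m * (B d a + B d b) ∧ B' d a + B' d b = B d a + B d b := by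
  induction m with
  | zero => exact ⟨B, .refl, h, by simp, rfl⟩
  | succ m ih =>
    obtain ⟨B', hBB', h', hx', hs'⟩ := ih
    obtain ⟨B'', hB'B'', h'', hx'', hy''⟩ :=
      h'.exists_reachable_add (hBB'.isSkewSymmetric hB) (by nlinarith) (by linarith)
    refine ⟨B'', hBB'.trans hB'B'', h'', ?_, ?_⟩
    · rw [hx'', hs', hx']
      push_cast
      ring
    · rw [hx'', hy'']
      linarith

lemma IsMarkovCycle.exists_reachable_lt (hB : IsSkewSymmetric B) (h : IsMarkovCycle B a b c)
    (hx : 0 < B d a) (hxy : 0 < B d a + B d b) (M : ℝ) :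
    ∃ B', Reachable B B' ∧ M < B' d a := by
  obtain ⟨m, hm⟩ := exists_nat_gt (M / (2 * (B d a + B d b)))
  obtain ⟨B', hBB', -, hx', -⟩ := h.exists_reachable_add_mul hB hx hxy m
  refine ⟨B', hBB', ?_⟩
  rw [div_lt_iff₀ (by positivity)] at hm
  nlinarith

lemma IsMarkovCycle.exists_reachable_pos_of_pos (hB : IsSkewSymmetric B)
    (h : IsMarkovCycle B a b c) (hdc : d ≠ c) (hx : 0 < B d a) :
    ∃ B' a' b' c', Reachable B B' ∧ IsMarkovCycle B' a' b' c' ∧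
      0 < B' d a' ∧ 0 < B' d a' + B' d b' := by
  by_cases hz : 0 < B d c
  · exact ⟨B, c, a, b, .refl, h.rotate.rotate, hz, by linarith⟩
  · rw [not_lt] at hz
    have h' := h.rotate.rotate
    refine ⟨RealQuiver.mutate B c, a, c, b, reachable_mutate B c, (h'.mutate hB).rotate.rotate,
      ?_, ?_⟩
    · rw [h'.mutate_apply_next hB hdc, abs_of_nonpos hz]
      linarith
    · rw [h'.mutate_apply_next hB hdc, abs_of_nonpos hz, mutate_apply_of_eq (.inr rfl)]
      linarith

lemma IsMarkovCycle.exists_reachable_pos (hB : IsSkewSymmetric B) (h : IsMarkovCycle B a b c)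
    (hdb : d ≠ b) (hdc : d ≠ c) (hx : B d a ≠ 0) :
    ∃ B' a' b' c', Reachable B B' ∧ IsMarkovCycle B' a' b' c' ∧
      0 < B' d a' ∧ 0 < B' d a' + B' d b' := by
  rcases hx.lt_or_gt with hneg | hpos
  · have hx₁ : 0 < RealQuiver.mutate B a d a := by
      rw [mutate_apply_of_eq (.inr rfl)]
      linarith
    obtain ⟨B', a', b', c', hBB', h'⟩ :=
      (h.mutate hB).exists_reachable_pos_of_pos (hB.mutate a) hdb hx₁
    exact ⟨B', a', b', c', (reachable_mutate B a).trans hBB', h'⟩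
  · exact h.exists_reachable_pos_of_pos hB hdc hpos

lemma IsMarkovCycle.exists_adjacent (hB : IsSkewSymmetric B) (hconn : Connected B)
    (hn : 4 ≤ n) (h : IsMarkovCycle B a b c) :
    ∃ a b c d, IsMarkovCycle B a b c ∧ d ≠ b ∧ d ≠ c ∧ B d a ≠ 0 := by
  obtain ⟨v, -, hv⟩ := Finset.exists_mem_notMem_of_card_lt_card
    (s := {a, b, c}) (t := Finset.univ) <| by
      grw [Finset.card_le_three, Finset.card_univ, Fintype.card_fin]
      omega
  obtain ⟨p⟩ := hconn.preconnected a v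
  obtain ⟨e, -, he, hv'⟩ := p.exists_boundary_dart {a, b, c} (by simp) (by simpa using hv)
  obtain ⟨hne, hB'⟩ := (toGraph_adj_iff hB).mp e.adj.symm
  simp only [Set.mem_insert_iff, Set.mem_singleton_iff, not_or] at he hv'
  obtain ⟨hva, hvb, hvc⟩ := hv'
  rcases he with he | he | he <;> rw [he] at hB'
  · exact ⟨a, b, c, e.snd, h, hvb, hvc, hB'⟩
  · exact ⟨b, c, a, e.snd, h.rotate, hvc, hva, hB'⟩
  · exact ⟨c, a, b, e.snd, h.rotate.rotate, hva, hvb, hB'⟩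

end MarkovCycle

lemma exists_isMarkovCycle_of_submatrix_eq {B : Matrix (Fin n) (Fin n) ℝ} {f : Fin 3 ↪ Fin n}
    {σ : Equiv.Perm (Fin 3)} (hf : B.submatrix f f = permute (cyclicQ 2 2 2) σ) :
    ∃ a b c, IsMarkovCycle B a b c := by
  have hB (i j : Fin 3) : B (f (σ.symm i)) (f (σ.symm j)) = cyclicQ 2 2 2 i j := by
    simpa [permute] using congrFun (congrFun hf (σ.symm i)) (σ.symm j)
  refine ⟨f (σ.symm 0), f (σ.symm 1), f (σ.symm 2), ?_, ?_, ?_⟩ <;>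
    simp [hB, cyclicQ]

/-- No connected mutation-finite quiver properly contains the Markov quiver. -/
theorem markov_subquiver_infinite {n : ℕ} (hn : 4 ≤ n)
    (B : Matrix (Fin n) (Fin n) ℝ) (hskew : IsSkewSymmetric B) (hconn : Connected B)
    (hsub : ∃ (f : Fin 3 ↪ Fin n) (σ : Equiv.Perm (Fin 3)),
      B.submatrix f f = permute (cyclicQ 2 2 2) σ) :
    ¬ MutationFinite B := by
  intro hfin
  obtain ⟨f, σ, hf⟩ := hsub
  obtain ⟨a, b, c, h⟩ := exists_isMarkovCycle_of_submatrix_eq hf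
  obtain ⟨a, b, c, d, h, hdb, hdc, hx⟩ := h.exists_adjacent hskew hconn hn
  obtain ⟨B', a', b', c', hBB', h', hx', hxy'⟩ := h.exists_reachable_pos hskew hdb hdc hx
  obtain ⟨M, hM⟩ := hfin.exists_upper_bound d a'
  obtain ⟨C, hB'C, hC⟩ := h'.exists_reachable_lt (hBB'.isSkewSymmetric hskew) hx' hxy' M
  exact (hM C (hBB'.trans hB'C)).not_gt hC

end RealQuiver
end
end

section
/- The mutation class of the rank-4 quiver F_4, defined by b_12 = 1, b_23 = √2, b_34 = 1 and all other off-diagonal entries 0, consists of exactly 8 quivers counted up to simultaneous permutation of the indices; in particular F_4 is mutation-finite. -/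
open Real

noncomputable section

namespace RealQuiver

variable {n : ℕ}

/-- The quiver `F₄`: `b₁₂ = 1`, `b₂₃ = √2`, `b₃₄ = 1`, all other entries `0`. -/
def F4 : Matrix (Fin 4) (Fin 4) ℝ :=
  !![0, 1, 0, 0;
     -1, 0, Real.sqrt 2, 0;
     0, -(Real.sqrt 2), 0, 1;
     0, 0, -1, 0]

/-! All quivers in the mutation class of `F₄` have entries in `ℤ[√2]`, and since the embedding
`ℤ[√2] → ℝ` is strictly monotone, mutation can be carried out exactly in `ℤ[√2]`, where
`decide` computes it. Mutation is equivariant under simultaneous permutation of the indices, so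
the class is the union of the permutation orbits of 8 representatives, reached from `F₄` by short
mutation sequences, once we check that each mutation of a representative is a permutation of a
representative and that no two representatives are permutations of one another. -/

lemma mutate_permute (B : Matrix (Fin n) (Fin n) ℝ) (σ : Equiv.Perm (Fin n)) (k : Fin n) :
    mutate (permute B σ) k = permute (mutate B (σ k)) σ := by
  ext i j
  simp only [mutate, permute, σ.injective.eq_iff]

lemma permute_permute (B : Matrix (Fin n) (Fin n) ℝ) (σ τ : Equiv.Perm (Fin n)) :
    permute (permute B τ) σ = permute B (τ * σ) := rfl

lemma reachable_foldl_mutate (B : Matrix (Fin n) (Fin n) ℝ) (ks : List (Fin n)) :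
    Reachable B (ks.foldl mutate B) := by
  induction ks generalizing B with
  | nil => exact .refl
  | cons k ks ih => exact .head ⟨k, rfl⟩ (ih (mutate B k))

def ClosedUnderMutationUpToPermute (S : Set (Matrix (Fin n) (Fin n) ℝ)) : Prop :=
  ∀ D ∈ S, ∀ k, ∃ D' ∈ S, ∃ σ, mutate D k = permute D' σ

namespace ClosedUnderMutationUpToPermute

variable {S : Set (Matrix (Fin n) (Fin n) ℝ)} {B : Matrix (Fin n) (Fin n) ℝ}

lemma exists_permute_of_reachable (hS : ClosedUnderMutationUpToPermute S) (hB : B ∈ S)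
    {C : Matrix (Fin n) (Fin n) ℝ} (h : Reachable B C) :
    ∃ D ∈ S, ∃ σ, C = permute D σ := by
  induction h with
  | refl => exact ⟨B, hB, 1, rfl⟩
  | tail _ hstep ih =>
    obtain ⟨D, hD, σ, rfl⟩ := ih
    obtain ⟨k, rfl⟩ := hstep
    obtain ⟨D', hD', τ, hτ⟩ := hS D hD (σ k)
    exact ⟨D', hD', τ * σ, by rw [mutate_permute, hτ, permute_permute]⟩

lemma mutationFinite (hS : ClosedUnderMutationUpToPermute S) (hB : B ∈ S) (hfin : S.Finite) :
    MutationFinite B := by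
  refine ((hfin.prod Set.finite_univ).image fun p => permute p.1 p.2).subset ?_
  intro C hC
  obtain ⟨D, hD, σ, rfl⟩ := hS.exists_permute_of_reachable hB hC
  exact ⟨(D, σ), ⟨hD, trivial⟩, rfl⟩

end ClosedUnderMutationUpToPermute

section OrderedRing

variable {R : Type*} [Ring R] [LinearOrder R]

def mutationTerm (x y : R) : R :=
  if 0 < x ∧ 0 < y then x * y else if x < 0 ∧ y < 0 then -(x * y) else 0

def ringMutate (B : Matrix (Fin n) (Fin n) R) (k : Fin n) : Matrix (Fin n) (Fin n) R :=
  fun i j => if i = k ∨ j = k then -B i j else B i j + mutationTerm (B i k) (B k j)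

lemma abs_mul_add_mul_abs_div_two (a b : ℝ) : (|a| * b + a * |b|) / 2 = mutationTerm a b := by
  unfold mutationTerm
  rcases lt_trichotomy a 0 with ha | rfl | ha <;> rcases lt_trichotomy b 0 with hb | rfl | hb <;>
    simp [*, abs_of_neg, abs_of_pos, not_lt_of_gt]

lemma map_mutationTerm {f : R →+* ℝ} (hf : StrictMono f) (x y : R) :
    f (mutationTerm x y) = mutationTerm (f x) (f y) := by
  have hpos (z : R) : 0 < f z ↔ 0 < z := by rw [← map_zero f, hf.lt_iff_lt]
  have hneg (z : R) : f z < 0 ↔ z < 0 := by rw [← map_zero f, hf.lt_iff_lt]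
  unfold mutationTerm
  simp only [hpos, hneg]
  split_ifs <;> simp

lemma mutate_map {f : R →+* ℝ} (hf : StrictMono f) (B : Matrix (Fin n) (Fin n) R) (k : Fin n) :
    mutate (B.map f) k = (ringMutate B k).map f := by
  ext i j
  simp only [mutate, ringMutate, Matrix.map_apply, abs_mul_add_mul_abs_div_two]
  split_ifs <;> simp [map_mutationTerm hf]

lemma foldl_mutate_map {f : R →+* ℝ} (hf : StrictMono f) (B : Matrix (Fin n) (Fin n) R)
    (ks : List (Fin n)) : ks.foldl mutate (B.map f) = (ks.foldl ringMutate B).map f := by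
  induction ks generalizing B with
  | nil => rfl
  | cons k ks ih => simp only [List.foldl_cons, mutate_map hf, ih]

end OrderedRing

lemma _root_.Zsqrtd.toReal_nonneg {d : ℕ} {a : ℤ√d} (ha : 0 ≤ a) :
    0 ≤ Zsqrtd.toReal (Int.natCast_nonneg d) a := by
  have hsq (y : ℕ) : (y * √d) * (y * √d) = (d * (y * y) : ℕ) := by
    push_cast
    rw [mul_mul_mul_comm, Real.mul_self_sqrt d.cast_nonneg]
    ring
  have hnonneg := Zsqrtd.nonneg_iff_zero_le.mpr ha
  obtain ⟨x, y, rfl | rfl | rfl⟩ := Zsqrtd.nonneg_cases hnonneg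
  · simp only [Zsqrtd.toReal_apply]
    positivity
  · have h : d * (y * y) ≤ x * x := by
      simpa [Zsqrtd.SqLe, mul_assoc] using Zsqrtd.nonnegg_pos_neg.mp hnonneg
    suffices y * √d ≤ x by simpa using this
    refine (mul_self_le_mul_self_iff (by positivity) (by positivity)).2 ?_
    rw [hsq]
    exact_mod_cast h
  · have h : x * x ≤ d * (y * y) := by
      simpa [Zsqrtd.SqLe, mul_assoc] using Zsqrtd.nonnegg_neg_pos.mp hnonneg
    suffices (x : ℝ) ≤ y * √d by simpa using this
    refine (mul_self_le_mul_self_iff (by positivity) (by positivity)).2 ?_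
    rw [hsq]
    exact_mod_cast h

lemma _root_.Zsqrtd.toReal_strictMono {d : ℕ} [Zsqrtd.Nonsquare d] :
    StrictMono (Zsqrtd.toReal (Int.natCast_nonneg d)) := by
  refine Monotone.strictMono_of_injective (fun a b hab => ?_) ?_
  · simpa only [map_sub, sub_nonneg] using Zsqrtd.toReal_nonneg (sub_nonneg.mpr hab)
  · refine Zsqrtd.toReal_injective _ fun m hm => Zsqrtd.Nonsquare.ns d m.natAbs ?_
    simpa [Int.natAbs_mul] using congrArg Int.natAbs hm

instance : Zsqrtd.Nonsquare 2 := ⟨fun n h => by rcases n with _ | _ | n <;> nlinarith⟩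

-- The order on `ℤ√d` is only available when `d` is written as the cast of a natural number.
local notation "ℤ√2" => Zsqrtd ((2 : ℕ) : ℤ)

def F4Zsqrt2 : Matrix (Fin 4) (Fin 4) ℤ√2 :=
  !![0, 1, 0, 0; -1, 0, Zsqrtd.sqrtd, 0; 0, -Zsqrtd.sqrtd, 0, 1; 0, 0, -1, 0]

def F4RepsZsqrt2 : Finset (Matrix (Fin 4) (Fin 4) ℤ√2) :=
  ([[], [0], [1], [2], [3], [0, 1], [1, 2], [1, 2, 1]].map
    (List.foldl ringMutate F4Zsqrt2)).toFinset

lemma card_F4RepsZsqrt2 : F4RepsZsqrt2.card = 8 := by decide +kernel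

lemma exists_ringMutate_eq_submatrix_of_mem_F4RepsZsqrt2 :
    ∀ r ∈ F4RepsZsqrt2, ∀ k, ∃ r' ∈ F4RepsZsqrt2, ∃ σ : Equiv.Perm (Fin 4),
      ringMutate r k = r'.submatrix σ σ := by
  decide +kernel

lemma eq_of_submatrix_eq_of_mem_F4RepsZsqrt2 : ∀ r ∈ F4RepsZsqrt2, ∀ r' ∈ F4RepsZsqrt2,
    ∀ σ : Equiv.Perm (Fin 4), r'.submatrix σ σ = r → r' = r := by
  decide +kernel

def toRealMatrix : Matrix (Fin 4) (Fin 4) ℤ√2 ↪ Matrix (Fin 4) (Fin 4) ℝ :=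
  ⟨(·.map (Zsqrtd.toReal (Int.natCast_nonneg 2))),
    Matrix.map_injective Zsqrtd.toReal_strictMono.injective⟩

def F4Reps : Finset (Matrix (Fin 4) (Fin 4) ℝ) := F4RepsZsqrt2.map toRealMatrix

lemma F4_eq_toRealMatrix : F4 = toRealMatrix F4Zsqrt2 := by
  ext i j
  fin_cases i <;> fin_cases j <;> simp [F4, F4Zsqrt2, toRealMatrix]

lemma F4_mem_F4Reps : F4 ∈ F4Reps := by
  rw [F4_eq_toRealMatrix]
  exact Finset.mem_map_of_mem _ (by decide +kernel)

lemma reachable_of_mem_F4Reps {D : Matrix (Fin 4) (Fin 4) ℝ} (hD : D ∈ F4Reps) :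
    Reachable F4 D := by
  obtain ⟨r, hr, rfl⟩ := Finset.mem_map.mp hD
  obtain ⟨ks, -, rfl⟩ := List.mem_map.mp (List.mem_toFinset.mp hr)
  rw [F4_eq_toRealMatrix, toRealMatrix, Function.Embedding.coeFn_mk,
    ← foldl_mutate_map Zsqrtd.toReal_strictMono]
  exact reachable_foldl_mutate _ ks

lemma closedUnderMutationUpToPermute_F4Reps :
    ClosedUnderMutationUpToPermute (F4Reps : Set (Matrix (Fin 4) (Fin 4) ℝ)) := by
  intro D hD k
  obtain ⟨r, hr, rfl⟩ := Finset.mem_map.mp hD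
  obtain ⟨r', hr', σ, hσ⟩ := exists_ringMutate_eq_submatrix_of_mem_F4RepsZsqrt2 r hr k
  refine ⟨toRealMatrix r', Finset.mem_map_of_mem _ hr', σ, ?_⟩
  rw [toRealMatrix, Function.Embedding.coeFn_mk, mutate_map Zsqrtd.toReal_strictMono, hσ]
  rfl

lemma eq_of_permute_eq_of_mem_F4Reps {D D' : Matrix (Fin 4) (Fin 4) ℝ} (hD : D ∈ F4Reps)
    (hD' : D' ∈ F4Reps) {σ : Equiv.Perm (Fin 4)} (h : D' = permute D σ) : D = D' := by
  obtain ⟨r, hr, rfl⟩ := Finset.mem_map.mp hD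
  obtain ⟨r', hr', rfl⟩ := Finset.mem_map.mp hD'
  have h' : r.submatrix σ σ = r' := (toRealMatrix.injective h).symm
  exact congrArg _ (eq_of_submatrix_eq_of_mem_F4RepsZsqrt2 r' hr' r hr σ h')

/-- The mutation class of `F₄` consists of exactly 8 quivers up to simultaneous
permutation of the indices; in particular `F₄` is mutation-finite. -/
theorem F4_mutation_class :
    MutationFinite F4 ∧
    ∃ R : Finset (Matrix (Fin 4) (Fin 4) ℝ),
      R.card = 8 ∧
      (∀ D ∈ R, Reachable F4 D) ∧
      (∀ C, Reachable F4 C → ∃ D ∈ R, ∃ σ : Equiv.Perm (Fin 4), C = permute D σ) ∧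
      (∀ D ∈ R, ∀ D' ∈ R, (∃ σ : Equiv.Perm (Fin 4), D' = permute D σ) → D = D') := by
  have hclosed := closedUnderMutationUpToPermute_F4Reps
  refine ⟨hclosed.mutationFinite F4_mem_F4Reps F4Reps.finite_toSet, F4Reps, ?_,
    fun D => reachable_of_mem_F4Reps, fun C => hclosed.exists_permute_of_reachable F4_mem_F4Reps,
    fun D hD D' hD' ⟨σ, h⟩ => eq_of_permute_eq_of_mem_F4Reps hD hD' h⟩
  rw [F4Reps, Finset.card_map, card_F4RepsZsqrt2]

end RealQuiver
end
end
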